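/- Let P ∈ ℝ[x₁,…,xₙ] be a nonzero polynomial with deg(P) = deg_{xₙ}(P) =: d. Then there exists M₀ > 0 such that for each M ≥ M₀, setting Q_M(x) := M(1 + x_{n−1}²)(1 + ‖x‖²)^d, the partial derivative ∂β/∂xₙ of the function β(x) := xₙ(1 − x_{n−1}·P(x)²/Q_M(x)) is strictly positive on the half-space {x ∈ ℝⁿ : x_{n−1} ≤ 0}. -/

import Mathlib

/-!
Along the line `t ↦ x + (t - xₙ) eₙ` the function is `t ↦ t - a/(M(1+a²)) · t P²/(1+‖x‖²)ᵈ`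
with `a = x_{n-1}` held fixed, so `∂β/∂xₙ = 1 - a/(M(1+a²)) · N/(1+‖x‖²)ᵈ⁺¹` for an explicit
polynomial `N` of degree at most `2(d+1)`. Such a polynomial is bounded by a constant `C` times
`(1+‖x‖²)ᵈ⁺¹`, and `|a|/(1+a²) ≤ 1/2`, so the correction is below `1` as soon as `2M > C`.
-/

open MvPolynomial

section Degree
variable {σ R : Type*} [CommSemiring R]

theorem totalDegree_X_mul_pderiv_le (p : MvPolynomial σ R) (i : σ) :
    (X i * pderiv i p).totalDegree ≤ p.totalDegree := by
  classical
  conv_lhs => rw [p.as_sum, map_sum, Finset.mul_sum]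
  refine totalDegree_finsetSum_le fun s hs => ?_
  rw [pderiv_monomial, X, monomial_mul]
  by_cases hsi : s i = 0
  · simp [hsi]
  have hs_eq : Finsupp.single i 1 + (s - Finsupp.single i 1) = s := by
    ext j
    by_cases h : j = i
    · subst h; simp; omega
    · simp [Ne.symm h]
  rw [hs_eq]
  exact (totalDegree_monomial_le _ _).trans (le_totalDegree hs)

end Degree

section Derivative
variable {σ 𝕜 : Type*} [NontriviallyNormedField 𝕜] [DecidableEq σ]

theorem hasDerivAt_eval_update (p : MvPolynomial σ 𝕜) (x : σ → 𝕜) (i : σ) (t : 𝕜) :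
    HasDerivAt (fun s => eval (Function.update x i s) p)
      (eval (Function.update x i t) (pderiv i p)) t := by
  induction p using MvPolynomial.induction_on with
  | C a => simpa using hasDerivAt_const t a
  | add p q hp hq => simpa using hp.fun_add hq
  | mul_X p j hp =>
    by_cases h : j = i
    · subst h
      have hmul := hp.fun_mul (hasDerivAt_id' t)
      simp only [map_mul, eval_X, Function.update_self, pderiv_mul, pderiv_X_self] at hmul ⊢
      simpa [add_comm, mul_comm] using hmul
    · have hmul := hp.mul_const (x j)
      simp only [map_mul, eval_X, Function.update_of_ne h, pderiv_mul, pderiv_X_of_ne h] at hmul ⊢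
      simpa [mul_comm, Function.update_of_ne h] using hmul

end Derivative

section SqNormAddOne
variable {σ : Type*} [Fintype σ]

noncomputable def sqNormAddOne : MvPolynomial σ ℝ := 1 + ∑ k, X k ^ 2

@[simp]
theorem eval_sqNormAddOne (x : σ → ℝ) : eval x sqNormAddOne = 1 + ∑ k, x k ^ 2 := by
  simp [sqNormAddOne]

theorem one_le_eval_sqNormAddOne (x : σ → ℝ) : 1 ≤ eval x sqNormAddOne := by
  rw [eval_sqNormAddOne]
  exact le_add_of_nonneg_right (by positivity)

theorem totalDegree_sqNormAddOne_le : (sqNormAddOne : MvPolynomial σ ℝ).totalDegree ≤ 2 :=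
  (totalDegree_add _ _).trans <| max_le (by simp) <|
    totalDegree_finsetSum_le fun k _ => (totalDegree_X_pow k 2).le

theorem pderiv_sqNormAddOne [DecidableEq σ] (i : σ) :
    pderiv i (sqNormAddOne : MvPolynomial σ ℝ) = 2 * X i := by
  simp [sqNormAddOne, pderiv_X, Pi.single_apply]

theorem sq_prod_pow_le (x : σ → ℝ) (v : σ →₀ ℕ) :
    (∏ i ∈ v.support, x i ^ v i) ^ 2 ≤ eval x sqNormAddOne ^ (v.sum fun _ e => e) := by
  rw [← Finset.prod_pow, Finsupp.sum, ← Finset.prod_pow_eq_pow_sum, eval_sqNormAddOne]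
  refine Finset.prod_le_prod (fun i _ => by positivity) fun i _ => ?_
  rw [← pow_mul, mul_comm, pow_mul]
  refine pow_le_pow_left₀ (sq_nonneg _) ?_ _
  have := Finset.single_le_sum (fun j _ => sq_nonneg (x j)) (Finset.mem_univ i)
  linarith

theorem abs_eval_div_sqNormAddOne_pow_le (R : MvPolynomial σ ℝ) {k : ℕ}
    (hR : R.totalDegree ≤ 2 * k) (x : σ → ℝ) :
    |eval x R / eval x sqNormAddOne ^ k| ≤ ∑ v ∈ R.support, |R.coeff v| := by
  have hS := one_le_eval_sqNormAddOne x
  have hSk : 0 < eval x sqNormAddOne ^ k := by positivity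
  rw [abs_div, abs_of_pos hSk, div_le_iff₀ hSk, eval_eq, Finset.sum_mul]
  refine (Finset.abs_sum_le_sum_abs _ _).trans (Finset.sum_le_sum fun v hv => ?_)
  rw [abs_mul]
  refine mul_le_mul_of_nonneg_left (abs_le_of_sq_le_sq ?_ (by positivity)) (abs_nonneg _)
  calc _ ≤ eval x sqNormAddOne ^ (v.sum fun _ e => e) := sq_prod_pow_le x v
    _ ≤ eval x sqNormAddOne ^ (k * 2) :=
      pow_le_pow_right₀ hS <| by have := le_totalDegree hv; omega
    _ = _ := pow_mul _ _ _

end SqNormAddOne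

section PartialDerivative
variable {σ : Type*} [Fintype σ]

/-- `∂ᵢ (xᵢ P² / (1 + ‖x‖²)ᵈ) = partialNumerator P i d / (1 + ‖x‖²)ᵈ⁺¹`. -/
noncomputable def partialNumerator (P : MvPolynomial σ ℝ) (i : σ) (d : ℕ) : MvPolynomial σ ℝ :=
  (P ^ 2 + (2 : ℝ) • (P * (X i * pderiv i P))) * sqNormAddOne - (2 * d : ℝ) • (X i ^ 2 * P ^ 2)

theorem totalDegree_partialNumerator_le {P : MvPolynomial σ ℝ} {d : ℕ} (hP : P.totalDegree ≤ d)
    (i : σ) : (partialNumerator P i d).totalDegree ≤ 2 * (d + 1) := by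
  have hP2 : (P ^ 2).totalDegree ≤ 2 * d := (totalDegree_pow _ _).trans (by omega)
  have hXP : (P * (X i * pderiv i P)).totalDegree ≤ 2 * d :=
    (totalDegree_mul _ _).trans (by have := totalDegree_X_mul_pderiv_le P i; omega)
  have hXXPP : (X i ^ 2 * P ^ 2).totalDegree ≤ 2 * (d + 1) :=
    (totalDegree_mul _ _).trans (by rw [totalDegree_X_pow]; omega)
  refine (totalDegree_sub _ _).trans (max_le ?_ ((totalDegree_smul_le _ _).trans hXXPP))
  refine (totalDegree_mul _ _).trans ?_
  have := (totalDegree_add _ _).trans (max_le hP2 ((totalDegree_smul_le (2 : ℝ) _).trans hXP))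
  have := totalDegree_sqNormAddOne_le (σ := σ)
  omega

theorem hasDerivAt_mul_sq_div_pow_update [DecidableEq σ] (P : MvPolynomial σ ℝ) (x : σ → ℝ)
    (i : σ) (d : ℕ) :
    HasDerivAt
      (fun t => t * (eval (Function.update x i t) P ^ 2 /
        eval (Function.update x i t) sqNormAddOne ^ d))
      (eval x (partialNumerator P i d) / eval x sqNormAddOne ^ (d + 1)) (x i) := by
  have hS := one_le_eval_sqNormAddOne x
  have hP := hasDerivAt_eval_update P x i (x i)
  have hN := hasDerivAt_eval_update sqNormAddOne x i (x i)
  rw [Function.update_eq_self] at hP hN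
  refine ((hasDerivAt_id' (x i)).fun_mul ((hP.fun_pow 2).fun_div (hN.fun_pow d)
    (by rw [Function.update_eq_self]; positivity))).congr_deriv ?_
  simp only [Function.update_eq_self, pderiv_sqNormAddOne, partialNumerator, map_sub, map_mul,
    map_add, map_pow, map_ofNat, smul_eval, eval_X]
  rcases d with _ | d <;> field_simp <;> push_cast <;> ring

/-- The paper's `β` with `xₙ = y i`, `x_{n-1} = y j` and exponent `d` in `Q_M`. -/
noncomputable def beta (P : MvPolynomial σ ℝ) (M : ℝ) (d : ℕ) (i j : σ) (y : σ → ℝ) : ℝ :=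
  y i * (1 - y j * eval y P ^ 2 / (M * (1 + y j ^ 2) * (1 + ∑ k, y k ^ 2) ^ d))

theorem differentiable_beta (P : MvPolynomial σ ℝ) {M : ℝ} (hM : M ≠ 0) (d : ℕ) (i j : σ) :
    Differentiable ℝ (beta P M d i j) := by
  have hP : Differentiable ℝ (fun y => eval y P) := fun y =>
    (AnalyticOnNhd.eval_mvPolynomial P y trivial).differentiableAt
  have hden (y : σ → ℝ) : M * (1 + y j ^ 2) * (1 + ∑ k, y k ^ 2) ^ d ≠ 0 := by positivity
  unfold beta
  simp only [div_eq_mul_inv]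
  fun_prop (disch := exact hden)

theorem fderiv_beta_single [DecidableEq σ] (P : MvPolynomial σ ℝ) {M : ℝ} (hM : M ≠ 0) (d : ℕ)
    {i j : σ} (hji : j ≠ i) (x : σ → ℝ) :
    fderiv ℝ (beta P M d i j) x (Pi.single i 1) =
      1 - x j / (M * (1 + x j ^ 2)) *
        (eval x (partialNumerator P i d) / eval x sqNormAddOne ^ (d + 1)) := by
  have hline : beta P M d i j ∘ Function.update x i = fun t =>
      t - x j / (M * (1 + x j ^ 2)) * (t * (eval (Function.update x i t) P ^ 2 /
        eval (Function.update x i t) sqNormAddOne ^ d)) := by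
    funext t
    simp only [Function.comp_apply, beta, Function.update_self, Function.update_of_ne hji,
      eval_sqNormAddOne]
    field_simp
  have hchain := (differentiable_beta P hM d i j).differentiableAt.hasFDerivAt.comp_hasDerivAt
    (x i) (hasDerivAt_update x i (x i))
  rw [Function.update_eq_self, hline] at hchain
  exact hchain.unique
    ((hasDerivAt_id' (x i)).sub ((hasDerivAt_mul_sq_div_pow_update P x i d).const_mul _))

end PartialDerivative

theorem div_mul_one_add_sq_mul_lt_one {a r C M : ℝ} (hr : |r| ≤ C) (hM : C < 2 * M) :
    a / (M * (1 + a ^ 2)) * r < 1 := by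
  have hM0 : 0 < M := by linarith [abs_nonneg r]
  rcases eq_or_ne a 0 with rfl | ha
  · simp
  have hAMGM : 2 * |a| ≤ 1 + a ^ 2 := by nlinarith [sq_abs a, sq_nonneg (|a| - 1)]
  rw [div_mul_eq_mul_div, div_lt_one (by positivity)]
  calc a * r ≤ |a| * C := (le_abs_self _).trans (abs_mul a r ▸ by gcongr)
    _ < |a| * (2 * M) := by gcongr
    _ ≤ M * (1 + a ^ 2) := by nlinarith

/-- With Q_M(x) := M(1+x_{n−1}²)(1+‖x‖²)^d, there is M₀ > 0 such that for M ≥ M₀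
the partial derivative ∂β/∂xₙ of β(x) := xₙ(1 − x_{n−1}P(x)²/Q_M(x)) is strictly
positive on {x_{n−1} ≤ 0}. Coordinates in ℝ^{n+2}: x_{n−1} is index n, xₙ the last. -/
theorem stmt_10 (n : ℕ) (P : MvPolynomial (Fin (n + 2)) ℝ) :
    ∃ M₀ > (0 : ℝ), ∀ M : ℝ, M₀ ≤ M → ∀ x : Fin (n + 2) → ℝ, x ⟨n, by omega⟩ ≤ 0 →
      0 < fderiv ℝ
        (fun y : Fin (n + 2) → ℝ =>
          y (Fin.last (n + 1)) *
            (1 - y ⟨n, by omega⟩ * (eval y P) ^ 2 /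
              (M * (1 + (y ⟨n, by omega⟩) ^ 2) * (1 + ∑ k, y k ^ 2) ^ P.totalDegree)))
        x (Pi.single (Fin.last (n + 1)) 1) := by
  set N := partialNumerator P (Fin.last (n + 1)) P.totalDegree
  have hN := abs_eval_div_sqNormAddOne_pow_le N (totalDegree_partialNumerator_le le_rfl _)
  have hC : 0 ≤ ∑ v ∈ N.support, |N.coeff v| := Finset.sum_nonneg fun _ _ => abs_nonneg _
  refine ⟨∑ v ∈ N.support, |N.coeff v| + 1, by linarith, fun M hM x _ => ?_⟩
  have hji : (⟨n, by omega⟩ : Fin (n + 2)) ≠ Fin.last (n + 1) := by simp [Fin.ext_iff]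
  change 0 < fderiv ℝ (beta P M P.totalDegree (Fin.last (n + 1)) ⟨n, by omega⟩) x _
  rw [fderiv_beta_single P (by linarith) _ hji, sub_pos]
  exact div_mul_one_add_sq_mul_lt_one (hN x) (by linarith)
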